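/- arXiv:1803.08154 — 5 statements merged into one kernel-verified Lean document; each statement's English description precedes it below -/
import Mathlib

section
/- Let 𝒴 ⊆ ℝ be a nonempty bounded set, K a finite index set, F_k : 𝒴 → ℝ fixed functions for k ∈ K, and let (Ω, 𝔉, P) be a probability space with random endpoint functions L_k, U_k : Ω × 𝒴 → ℝ. Define the distribution-coverage event A := {ω ∈ Ω : ∀ k ∈ K, ∀ y ∈ 𝒴, L_k(ω, y) ≤ F_k(y) ≤ U_k(ω, y)} and the quantile-coverage event B := {ω ∈ Ω : ∀ k ∈ K, ∀ τ ∈ (0,1), U_k(ω, ·)^←(τ) ≤ F_k^←(τ) ≤ L_k(ω, ·)^←(τ)}. Then A ⊆ B, and consequently if the outer P-measure of A is at least p then the outer P-measure of B is at least p. -/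
open MeasureTheory

/-- The left-inverse of `G` on the set `𝒴`:
`G^←(τ) = inf({y ∈ 𝒴 : G(y) ≥ τ} ∪ {sup 𝒴})`. -/
noncomputable def leftInv (Y : Set ℝ) (G : ℝ → ℝ) (τ : ℝ) : ℝ :=
  sInf ({y ∈ Y | τ ≤ G y} ∪ {sSup Y})

lemma leftInv_anti {Y : Set ℝ} (hb : Bornology.IsBounded Y) {G H : ℝ → ℝ} (τ : ℝ)
    (h : ∀ y ∈ Y, G y ≤ H y) : leftInv Y H τ ≤ leftInv Y G τ := by
  apply csInf_le_csInf
  · rcases hb.bddBelow with ⟨c, hc⟩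
    exact ⟨min c (sSup Y), fun y hy => by
      rcases hy with ⟨hyY, _⟩ | hy
      · exact le_trans (min_le_left _ _) (hc hyY)
      · rw [Set.mem_singleton_iff.mp hy]; exact min_le_right _ _⟩
  · exact ⟨sSup Y, Or.inr rfl⟩
  · rintro y (⟨hyY, hτ⟩ | hy)
    · exact Or.inl ⟨hyY, le_trans hτ (h y hyY)⟩
    · exact Or.inr hy

/-- If the random bands `[L_k, U_k]` jointly cover the distribution functions `F_k`
on `𝒴` (event `A`), then the inverted bands `[U_k^←, L_k^←]` jointly cover the
quantile functions `F_k^←` on `(0,1)` (event `B`); hence `A ⊆ B` and the outer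
probability of `B` is at least that of `A`. -/
theorem stmt_1 {Ω : Type*} [MeasurableSpace Ω] (P : Measure Ω) [IsProbabilityMeasure P]
    {K : Type*} [Finite K]
    (Y : Set ℝ) (hY : Y.Nonempty) (hb : Bornology.IsBounded Y)
    (F : K → ℝ → ℝ) (L U : K → Ω → ℝ → ℝ) (p : ENNReal)
    (A B : Set Ω)
    (hA : A = {ω | ∀ k : K, ∀ y ∈ Y, L k ω y ≤ F k y ∧ F k y ≤ U k ω y})
    (hB : B = {ω | ∀ k : K, ∀ τ ∈ Set.Ioo (0 : ℝ) 1,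
      leftInv Y (U k ω) τ ≤ leftInv Y (F k) τ ∧
      leftInv Y (F k) τ ≤ leftInv Y (L k ω) τ}) :
    A ⊆ B ∧ (p ≤ P A → p ≤ P B) := by
  have hAB : A ⊆ B := by
    intro ω hω
    rw [hA] at hω
    rw [hB]
    intro k τ _
    exact ⟨leftInv_anti hb τ (fun y hy => (hω k y hy).2),
      leftInv_anti hb τ (fun y hy => (hω k y hy).1)⟩
  exact ⟨hAB, fun hp => le_trans hp (measure_mono hAB)⟩
end

section
/- Let 𝒴 ⊆ ℝ be a nonempty bounded set, F_0, F_1 : 𝒴 → ℝ fixed functions, and let (Ω, 𝔉, P) be a probability space with random endpoint functions L_k, U_k : Ω × 𝒴 → ℝ for k ∈ {0,1}. Define the joint distribution-coverage event A := {ω ∈ Ω : ∀ k ∈ {0,1}, ∀ y ∈ 𝒴, L_k(ω, y) ≤ F_k(y) ≤ U_k(ω, y)} and the effect-coverage event C := {ω ∈ Ω : ∀ τ ∈ (0,1), U_1(ω, ·)^←(τ) − L_0(ω, ·)^←(τ) ≤ F_1^←(τ) − F_0^←(τ) ≤ L_1(ω, ·)^←(τ) − U_0(ω, ·)^←(τ)}.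 Then A ⊆ C, and consequently if the outer P-measure of A is at least p then the outer P-measure of C is at least p; that is, the quantile effect function Δ(τ) = F_1^←(τ) − F_0^←(τ) is covered by the Minkowski-difference band [U_1^← − L_0^←, L_1^← − U_0^←] with probability at least p. -/
open MeasureTheory

lemma leftInv_mono (Y : Set ℝ) (hb : Bornology.IsBounded Y)
    {G H : ℝ → ℝ} (h : ∀ y ∈ Y, G y ≤ H y) (τ : ℝ) :
    leftInv Y H τ ≤ leftInv Y G τ := by
  have hbdd : BddBelow (Y ∪ {sSup Y}) := by
    rcases (hb.union (Bornology.isBounded_singleton (x := sSup Y))).bddBelow with ⟨c, hc⟩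
    exact ⟨c, hc⟩
  apply csInf_le_csInf
  · refine hbdd.mono ?_
    rintro x (⟨hx, -⟩ | hx)
    · exact Or.inl hx
    · exact Or.inr hx
  · exact ⟨sSup Y, Or.inr rfl⟩
  · rintro x (⟨hxY, hτ⟩ | hx)
    · exact Or.inl ⟨hxY, hτ.trans (h x hxY)⟩
    · exact Or.inr hx

/-- If the random bands `[L_k, U_k]`, `k ∈ {0,1}`, jointly cover `F_0` and `F_1`
on `𝒴` (event `A`), then the Minkowski-difference band
`[U_1^← − L_0^←, L_1^← − U_0^←]` covers the quantile effect function
`Δ(τ) = F_1^←(τ) − F_0^←(τ)` on `(0,1)` (event `C`); hence `A ⊆ C` and the outer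
probability of `C` is at least that of `A`. -/
theorem stmt_2 {Ω : Type*} [MeasurableSpace Ω] (P : Measure Ω) [IsProbabilityMeasure P]
    (Y : Set ℝ) (hY : Y.Nonempty) (hb : Bornology.IsBounded Y)
    (F₀ F₁ : ℝ → ℝ) (L₀ L₁ U₀ U₁ : Ω → ℝ → ℝ) (p : ENNReal)
    (A C : Set Ω)
    (hA : A = {ω | ∀ y ∈ Y, (L₀ ω y ≤ F₀ y ∧ F₀ y ≤ U₀ ω y) ∧
      (L₁ ω y ≤ F₁ y ∧ F₁ y ≤ U₁ ω y)})
    (hC : C = {ω | ∀ τ ∈ Set.Ioo (0 : ℝ) 1,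
      leftInv Y (U₁ ω) τ - leftInv Y (L₀ ω) τ ≤ leftInv Y F₁ τ - leftInv Y F₀ τ ∧
      leftInv Y F₁ τ - leftInv Y F₀ τ ≤ leftInv Y (L₁ ω) τ - leftInv Y (U₀ ω) τ}) :
    A ⊆ C ∧ (p ≤ P A → p ≤ P C) := by
  have hsub : A ⊆ C := by
    intro ω hω
    rw [hA] at hω
    rw [hC]
    intro τ _
    have h1 : leftInv Y (U₁ ω) τ ≤ leftInv Y F₁ τ :=
      leftInv_mono Y hb (fun y hy => (hω y hy).2.2) τ
    have h2 : leftInv Y F₁ τ ≤ leftInv Y (L₁ ω) τ :=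
      leftInv_mono Y hb (fun y hy => (hω y hy).2.1) τ
    have h3 : leftInv Y (U₀ ω) τ ≤ leftInv Y F₀ τ :=
      leftInv_mono Y hb (fun y hy => (hω y hy).1.2) τ
    have h4 : leftInv Y F₀ τ ≤ leftInv Y (L₀ ω) τ :=
      leftInv_mono Y hb (fun y hy => (hω y hy).1.1) τ
    constructor <;> linarith
  exact ⟨hsub, fun hp => hp.trans (measure_mono hsub)⟩
end

section
/- Let d ≥ 1, let U ⊆ ℝ^d be open with x₀ ∈ U, let Q : ℝ^d → ℝ be differentiable at x₀, let β : ℝ → ℝ^d, c ∈ ℝ, u ∈ ℝ, and let Λ : ℝ × ℝ → ℝ. Set y₀ := Q(x₀) and π₀ := ⟨x₀, β(y₀)⟩ + c, and define G : ℝ × ℝ^d → ℝ by G(y, x) := Λ(y, ⟨x, β(y)⟩ + c). Assume: (i) G(Q(x), x) = u for all x ∈ U; (ii) G is Fréchet differentiable at (y₀, x₀), with partial derivative D_y := ∂G/∂y (y₀, x₀) in the first argument satisfying D_y > 0; (iii) the map z ↦ Λ(y₀, z) is differentiable at π₀ with derivative λ > 0. Then for every coordinate k ∈ {1,…,d}, β_k(y₀)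 = −(D_y / λ) · ∂Q/∂x_k (x₀); in particular each β_k(y₀) is a negative multiple (with factor independent of k) of the partial derivative of the conditional quantile function, and for any ℓ, k with ∂Q/∂x_k (x₀) ≠ 0 one has β_ℓ(y₀) / β_k(y₀) = (∂Q/∂x_ℓ (x₀)) / (∂Q/∂x_k (x₀)). -/
/-- In the distribution regression model `F(y | x) = Λ_y(x'β(y) + c)`, if the conditional
`u`-quantile `Q` satisfies `Λ(Q(x), x'β(Q(x)) + c) = u` on an open set around `x₀`, and the
map `G(y,x) = Λ(y, x'β(y) + c)` is Fréchet differentiable at `(y₀, x₀)` with positive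
partial derivative `D_y` in `y`, and `z ↦ Λ(y₀, z)` has positive derivative `λ` at the
index `π₀`, then `β_k(y₀) = −(D_y/λ) ∂Q/∂x_k(x₀)` for each coordinate `k`, and ratios of
coefficients equal ratios of quantile partial derivatives. -/
theorem stmt_3 {d : ℕ} (hd : 1 ≤ d)
    (U : Set (EuclideanSpace ℝ (Fin d))) (hU : IsOpen U)
    (x₀ : EuclideanSpace ℝ (Fin d)) (hx₀ : x₀ ∈ U)
    (Q : EuclideanSpace ℝ (Fin d) → ℝ) (hQ : DifferentiableAt ℝ Q x₀)
    (β : ℝ → EuclideanSpace ℝ (Fin d)) (c u : ℝ)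
    (Λ : ℝ × ℝ → ℝ)
    (y₀ : ℝ) (hy₀ : y₀ = Q x₀)
    (π₀ : ℝ) (hπ₀ : π₀ = (inner ℝ x₀ (β y₀) : ℝ) + c)
    (G : ℝ × EuclideanSpace ℝ (Fin d) → ℝ)
    (hGdef : ∀ (y : ℝ) (x : EuclideanSpace ℝ (Fin d)),
      G (y, x) = Λ (y, (inner ℝ x (β y) : ℝ) + c))
    (hGu : ∀ x ∈ U, G (Q x, x) = u)
    (hGdiff : DifferentiableAt ℝ G (y₀, x₀))
    (Dy : ℝ) (hDy : Dy = fderiv ℝ G (y₀, x₀) (1, 0)) (hDypos : 0 < Dy)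
    (lam : ℝ) (hΛdiff : HasDerivAt (fun z => Λ (y₀, z)) lam π₀) (hlam : 0 < lam) :
    (∀ k : Fin d,
      β y₀ k = -(Dy / lam) * fderiv ℝ Q x₀ (EuclideanSpace.single k 1)) ∧
    (∀ ℓ k : Fin d, fderiv ℝ Q x₀ (EuclideanSpace.single k 1) ≠ 0 →
      β y₀ ℓ / β y₀ k =
        fderiv ℝ Q x₀ (EuclideanSpace.single ℓ 1) /
          fderiv ℝ Q x₀ (EuclideanSpace.single k 1)) := by
  subst hy₀
  set y₀ := Q x₀ with hy₀
  set F := fderiv ℝ G (y₀, x₀) with hF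
  set q := fderiv ℝ Q x₀ with hq
  -- Step 1: composed map is constant, so derivative vanishes
  have hφ : HasFDerivAt (fun x : (EuclideanSpace ℝ (Fin d)) => (Q x, x))
      (q.prod (ContinuousLinearMap.id ℝ (EuclideanSpace ℝ (Fin d)))) x₀ :=
    HasFDerivAt.prodMk hQ.hasFDerivAt (hasFDerivAt_id x₀)
  have hcomp : HasFDerivAt (fun x : (EuclideanSpace ℝ (Fin d)) => G (Q x, x))
      (F.comp (q.prod (ContinuousLinearMap.id ℝ (EuclideanSpace ℝ (Fin d))))) x₀ := by
    exact HasFDerivAt.comp (f := fun x => (Q x, x)) x₀ hGdiff.hasFDerivAt hφ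
  have heq : (fun x : (EuclideanSpace ℝ (Fin d)) => G (Q x, x)) =ᶠ[nhds x₀] fun _ => u := by
    filter_upwards [hU.mem_nhds hx₀] with x hx using hGu x hx
  have hconst : HasFDerivAt (fun _ : (EuclideanSpace ℝ (Fin d)) => u)
      (F.comp (q.prod (ContinuousLinearMap.id ℝ (EuclideanSpace ℝ (Fin d))))) x₀ :=
    hcomp.congr_of_eventuallyEq heq.symm
  have hzero : F.comp (q.prod (ContinuousLinearMap.id ℝ (EuclideanSpace ℝ (Fin d)))) = 0 :=
    hconst.unique (hasFDerivAt_const u x₀)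
  have hzero' : ∀ v : (EuclideanSpace ℝ (Fin d)), F (q v, v) = 0 := by
    intro v
    have := congrArg (fun (T : (EuclideanSpace ℝ (Fin d)) →L[ℝ] ℝ) => T v) hzero
    simpa using this
  -- Step 2: partial derivative in x of G at (y₀, x₀)
  have hL : HasFDerivAt (fun x : (EuclideanSpace ℝ (Fin d)) => (inner ℝ x (β y₀) : ℝ) + c)
      (innerSL ℝ (β y₀)) x₀ := by
    have h1 : HasFDerivAt (fun x : (EuclideanSpace ℝ (Fin d)) => (inner ℝ (β y₀) x : ℝ) + c)
        (innerSL ℝ (β y₀)) x₀ := by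
      simpa using ((innerSL ℝ (β y₀)).hasFDerivAt (x := x₀)).add_const c
    exact h1.congr_of_eventuallyEq (by
      filter_upwards with x
      rw [real_inner_comm])
  have hπ₀' : π₀ = (inner ℝ x₀ (β y₀) : ℝ) + c := hπ₀
  have h2b : HasFDerivAt (fun x : (EuclideanSpace ℝ (Fin d)) => Λ (y₀, (inner ℝ x (β y₀) : ℝ) + c))
      (lam • (innerSL ℝ (β y₀))) x₀ := by
    rw [hπ₀'] at hΛdiff; exact hΛdiff.comp_hasFDerivAt x₀ hL
  have h2a : HasFDerivAt (fun x : (EuclideanSpace ℝ (Fin d)) => G (y₀, x))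
      (F.comp ((0 : (EuclideanSpace ℝ (Fin d)) →L[ℝ] ℝ).prod (ContinuousLinearMap.id ℝ (EuclideanSpace ℝ (Fin d))))) x₀ :=
    hGdiff.hasFDerivAt.comp x₀ (HasFDerivAt.prodMk (hasFDerivAt_const y₀ x₀) (hasFDerivAt_id x₀))
  have h2b' : HasFDerivAt (fun x : (EuclideanSpace ℝ (Fin d)) => G (y₀, x))
      (lam • (innerSL ℝ (β y₀))) x₀ := by
    refine h2b.congr_of_eventuallyEq ?_
    filter_upwards with x
    rw [hGdef]
  have hEq : F.comp ((0 : (EuclideanSpace ℝ (Fin d)) →L[ℝ] ℝ).prod (ContinuousLinearMap.id ℝ (EuclideanSpace ℝ (Fin d))))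
      = lam • (innerSL ℝ (β y₀)) := h2a.unique h2b'
  have hF0 : ∀ v : (EuclideanSpace ℝ (Fin d)), F (0, v) = lam * (inner ℝ (β y₀) v : ℝ) := by
    intro v
    have := congrArg (fun (T : (EuclideanSpace ℝ (Fin d)) →L[ℝ] ℝ) => T v) hEq
    simpa using this
  -- combine
  have key : ∀ v : (EuclideanSpace ℝ (Fin d)), q v * Dy + lam * (inner ℝ (β y₀) v : ℝ) = 0 := by
    intro v
    have hsplit : ((q v, v) : ℝ × (EuclideanSpace ℝ (Fin d))) = q v • ((1 : ℝ), (0 : (EuclideanSpace ℝ (Fin d)))) + ((0 : ℝ), v) := by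
      simp [Prod.ext_iff]
    have := hzero' v
    rw [hsplit, map_add, map_smul, hF0 v] at this
    rw [hDy]
    simpa [smul_eq_mul, mul_comm] using this
  have hbk : ∀ k : Fin d, β y₀ k = -(Dy / lam) * q (EuclideanSpace.single k 1) := by
    intro k
    have h := key (EuclideanSpace.single k 1)
    have hin : (inner ℝ (β y₀) (EuclideanSpace.single k 1) : ℝ) = β y₀ k := by
      rw [EuclideanSpace.inner_single_right]; simp
    rw [hin] at h
    field_simp
    linarith
  refine ⟨hbk, fun ℓ k hk => ?_⟩
  rw [hbk ℓ, hbk k]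
  have hne : -(Dy / lam) ≠ 0 := by
    have := div_pos hDypos hlam; linarith
  rw [mul_div_mul_left _ _ hne]
end

section
/- Let D be a nonempty finite subset of {1,…,I} × {1,…,J} with n = |D|, let ω_{ij} > 0 satisfy ω_{ij} ≥ b_min > 0 for all (i,j) ∈ D, and let x_{ij} ∈ ℝ^d. Assume the non-collinearity condition: there is c₃ > 0 such that for every δ ∈ ℝ^d with ‖δ‖ = 1 and every (a, b) ∈ ℝ^I × ℝ^J, (1/n) Σ_{(i,j) ∈ D} (⟨x_{ij}, δ⟩ − a_i − b_j)² ≥ c₃. Suppose for each coordinate ℓ ∈ {1,…,d} the pair (α^ℓ, γ^ℓ) ∈ ℝ^I × ℝ^J minimizes (a, c) ↦ Σ_{(i,j) ∈ D} ω_{ij} (x_{ij}^ℓ − a_i − c_j)², and set x̃_{ij} := x_{ij} − α_i − γ_j componentwise and W := (1/n) Σ_{(i,j) ∈ D} ω_{ij} x̃_{ij} x̃_{ij}'. Then for every δ ∈ ℝ^d, δ'Wδ ≥ b_min · c₃ · ‖δ‖²; in particular the smallest eigenvalue of W is at least b_min c₃ > 0 and W is invertible. -/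
open Matrix BigOperators Finset

/-- Under the non-collinearity condition and weights bounded below by `b_min > 0`, the
weighted Gram matrix `W` of the residuals `x̃_{ij} = x_{ij} − α_i − γ_j` from the weighted
two-way projection satisfies `δ'Wδ ≥ b_min c₃ ‖δ‖²` for all `δ`; in particular `W` is
invertible. -/
theorem stmt_5 {I J d : ℕ} (D : Finset (Fin I × Fin J)) (hD : D.Nonempty)
    (n : ℕ) (hn : n = D.card)
    (ω : Fin I × Fin J → ℝ) (bmin : ℝ) (hbmin : 0 < bmin)
    (hω : ∀ p ∈ D, bmin ≤ ω p)
    (x : Fin I × Fin J → Fin d → ℝ)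
    (c₃ : ℝ) (hc₃ : 0 < c₃)
    (hnc : ∀ δ : Fin d → ℝ, Real.sqrt (∑ k, δ k ^ 2) = 1 →
      ∀ (a : Fin I → ℝ) (b : Fin J → ℝ),
        c₃ ≤ (n : ℝ)⁻¹ * ∑ p ∈ D, (x p ⬝ᵥ δ - a p.1 - b p.2) ^ 2)
    (α : Fin I → Fin d → ℝ) (γ : Fin J → Fin d → ℝ)
    (hmin : ∀ ℓ : Fin d, ∀ (a : Fin I → ℝ) (c : Fin J → ℝ),
      (∑ p ∈ D, ω p * (x p ℓ - α p.1 ℓ - γ p.2 ℓ) ^ 2) ≤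
      (∑ p ∈ D, ω p * (x p ℓ - a p.1 - c p.2) ^ 2))
    (xt : Fin I × Fin J → Fin d → ℝ)
    (hxt : ∀ p, xt p = x p - α p.1 - γ p.2)
    (W : Matrix (Fin d) (Fin d) ℝ)
    (hW : ∀ k l, W k l = (n : ℝ)⁻¹ * ∑ p ∈ D, ω p * xt p k * xt p l) :
    (∀ δ : Fin d → ℝ, bmin * c₃ * (∑ k, δ k ^ 2) ≤ δ ⬝ᵥ W.mulVec δ) ∧ IsUnit W := by
  have hnpos : (0:ℝ) < (n:ℝ) := by
    have : 0 < D.card := Finset.card_pos.mpr hD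
    have : 0 < n := hn ▸ this
    exact_mod_cast this
  -- quadratic form formula
  have key : ∀ δ : Fin d → ℝ,
      δ ⬝ᵥ W.mulVec δ = (n : ℝ)⁻¹ * ∑ p ∈ D, ω p * (xt p ⬝ᵥ δ) ^ 2 := by
    intro δ
    have hrhs : (n : ℝ)⁻¹ * ∑ p ∈ D, ω p * (xt p ⬝ᵥ δ) ^ 2
        = ∑ k, ∑ l, ∑ p ∈ D, (n : ℝ)⁻¹ * (δ k * (ω p * xt p k * xt p l) * δ l) := by
      rw [Finset.mul_sum]
      have h1 : ∀ p, (n : ℝ)⁻¹ * (ω p * (xt p ⬝ᵥ δ) ^ 2)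
          = ∑ k, ∑ l, (n : ℝ)⁻¹ * (δ k * (ω p * xt p k * xt p l) * δ l) := by
        intro p
        rw [sq, dotProduct, Finset.sum_mul_sum, Finset.mul_sum, Finset.mul_sum]
        refine Finset.sum_congr rfl fun k _ => ?_
        rw [Finset.mul_sum, Finset.mul_sum]
        exact Finset.sum_congr rfl fun l _ => by ring
      rw [Finset.sum_congr rfl fun p _ => h1 p, Finset.sum_comm]
      exact Finset.sum_congr rfl fun k _ => Finset.sum_comm
    rw [hrhs]
    simp only [dotProduct, Matrix.mulVec, hW, Finset.mul_sum, Finset.sum_mul]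
    refine Finset.sum_congr rfl fun k _ => Finset.sum_congr rfl fun l _ =>
      Finset.sum_congr rfl fun p _ => by ring
  -- main inequality
  have main : ∀ δ : Fin d → ℝ, bmin * c₃ * (∑ k, δ k ^ 2) ≤ δ ⬝ᵥ W.mulVec δ := by
    intro δ
    rcases eq_or_ne (∑ k, δ k ^ 2) 0 with hs | hs
    · have hδ : ∀ k, δ k = 0 := by
        intro k
        have := Finset.sum_eq_zero_iff_of_nonneg
          (fun i _ => sq_nonneg (δ i)) |>.mp hs k (Finset.mem_univ k)
        exact pow_eq_zero_iff (two_ne_zero) |>.mp this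
      have : δ = 0 := funext hδ
      rw [hs, this]
      simp
    · have hspos : 0 < ∑ k, δ k ^ 2 :=
        lt_of_le_of_ne (Finset.sum_nonneg fun i _ => sq_nonneg (δ i)) (Ne.symm hs)
      set r := Real.sqrt (∑ k, δ k ^ 2) with hr
      have hrpos : 0 < r := Real.sqrt_pos.mpr hspos
      have hr2 : r ^ 2 = ∑ k, δ k ^ 2 := Real.sq_sqrt hspos.le
      -- apply hnc to δ / r
      have hu : Real.sqrt (∑ k, (δ k / r) ^ 2) = 1 := by
        have : ∑ k, (δ k / r) ^ 2 = (∑ k, δ k ^ 2) / r ^ 2 := by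
          rw [Finset.sum_div]
          exact Finset.sum_congr rfl fun k _ => div_pow _ _ _
        rw [this, hr2, div_self hspos.ne']
        exact Real.sqrt_one
      have hnc' := hnc (fun k => δ k / r) hu (fun i => (α i ⬝ᵥ δ) / r)
        (fun j => (γ j ⬝ᵥ δ) / r)
      have heq : ∀ p ∈ D, (x p ⬝ᵥ fun k => δ k / r) - (α p.1 ⬝ᵥ δ) / r - (γ p.2 ⬝ᵥ δ) / r
          = (xt p ⬝ᵥ δ) / r := by
        intro p _
        have : (x p ⬝ᵥ fun k => δ k / r) = (x p ⬝ᵥ δ) / r := by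
          simp only [dotProduct, Finset.sum_div]
          exact Finset.sum_congr rfl fun k _ => (mul_div_assoc _ _ _).symm
        rw [this, div_sub_div_same, div_sub_div_same]
        congr 1
        simp only [dotProduct, hxt, Pi.sub_apply, sub_mul, Finset.sum_sub_distrib]
      have hnc2 : c₃ * (∑ k, δ k ^ 2) ≤ (n : ℝ)⁻¹ * ∑ p ∈ D, (xt p ⬝ᵥ δ) ^ 2 := by
        have h2 : (n : ℝ)⁻¹ * ∑ p ∈ D, ((xt p ⬝ᵥ δ) / r) ^ 2
            = ((n : ℝ)⁻¹ * ∑ p ∈ D, (xt p ⬝ᵥ δ) ^ 2) / (∑ k, δ k ^ 2) := by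
          rw [mul_div_assoc, Finset.sum_div]
          congr 1
          refine Finset.sum_congr rfl fun p _ => ?_
          rw [div_pow, hr2]
        have hsum : ∑ p ∈ D, ((x p ⬝ᵥ fun k => δ k / r) - (α p.1 ⬝ᵥ δ) / r
            - (γ p.2 ⬝ᵥ δ) / r) ^ 2 = ∑ p ∈ D, ((xt p ⬝ᵥ δ) / r) ^ 2 :=
          Finset.sum_congr rfl fun p hp => by rw [heq p hp]
        have := hnc'
        rw [hsum, h2] at this
        calc c₃ * (∑ k, δ k ^ 2)
            ≤ (((n : ℝ)⁻¹ * ∑ p ∈ D, (xt p ⬝ᵥ δ) ^ 2) / (∑ k, δ k ^ 2)) * (∑ k, δ k ^ 2) :=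
              mul_le_mul_of_nonneg_right this hspos.le
          _ = (n : ℝ)⁻¹ * ∑ p ∈ D, (xt p ⬝ᵥ δ) ^ 2 := div_mul_cancel₀ _ hs
      -- lower bound weights by bmin
      have hquad : bmin * ((n : ℝ)⁻¹ * ∑ p ∈ D, (xt p ⬝ᵥ δ) ^ 2) ≤ δ ⬝ᵥ W.mulVec δ := by
        rw [key δ]
        rw [mul_left_comm]
        refine mul_le_mul_of_nonneg_left ?_ (inv_nonneg.mpr hnpos.le)
        rw [Finset.mul_sum]
        refine Finset.sum_le_sum fun p hp => ?_
        exact mul_le_mul_of_nonneg_right (hω p hp) (sq_nonneg _)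
      calc bmin * c₃ * (∑ k, δ k ^ 2) = bmin * (c₃ * (∑ k, δ k ^ 2)) := by ring
        _ ≤ bmin * ((n : ℝ)⁻¹ * ∑ p ∈ D, (xt p ⬝ᵥ δ) ^ 2) :=
            mul_le_mul_of_nonneg_left hnc2 hbmin.le
        _ ≤ δ ⬝ᵥ W.mulVec δ := hquad
  refine ⟨main, ?_⟩
  -- positive definiteness
  have hposdef : W.PosDef := by
    refine Matrix.PosDef.of_dotProduct_mulVec_pos ?_ ?_
    · ext k l
      simp only [Matrix.conjTranspose_apply, hW, star_trivial]
      congr 1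
      exact Finset.sum_congr rfl fun p _ => by ring
    · intro δ hδ
      have hspos : 0 < ∑ k, δ k ^ 2 := by
        rcases Function.ne_iff.mp hδ with ⟨k, hk⟩
        have hk' : δ k ≠ 0 := by simpa using hk
        refine Finset.sum_pos' (fun i _ => sq_nonneg _) ⟨k, Finset.mem_univ k, ?_⟩
        exact lt_of_le_of_ne (sq_nonneg _) (Ne.symm (pow_ne_zero 2 hk'))
      have := main δ
      have hlt : 0 < δ ⬝ᵥ W.mulVec δ :=
        lt_of_lt_of_le (by positivity) this
      simpa [star_trivial] using hlt
  exact hposdef.isUnit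
end

section
/- Let H be a real symmetric m × m matrix, let v ∈ ℝ^m be nonzero with Hv = 0, set c := ‖v‖² > 0, and suppose M := H + vv'/c is invertible. Then G := M^{−1} − vv'/c satisfies the four Penrose conditions with respect to H: (a) HGH = H; (b) GHG = G; (c) HG is symmetric, with HG = I_m − vv'/c; and (d) GH is symmetric, with GH = I_m − vv'/c. In particular G is the Moore–Penrose pseudoinverse of H, and additionally G is symmetric with Gv = 0. -/
open Matrix BigOperators

/-- For a real symmetric matrix `H` with null vector `v ≠ 0`, `c = ‖v‖²`, and
`M = H + vv'/c` invertible, the matrix `G = M⁻¹ − vv'/c` satisfies the four Penrose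
conditions (so it is the Moore–Penrose pseudoinverse of `H`), with
`HG = GH = I − vv'/c`, and moreover `G` is symmetric with `Gv = 0`. -/
theorem stmt_15 {m : ℕ} (H : Matrix (Fin m) (Fin m) ℝ) (hsym : Hᵀ = H)
    (v : Fin m → ℝ) (hv : v ≠ 0) (hHv : H.mulVec v = 0)
    (c : ℝ) (hc : c = ∑ i, v i ^ 2)
    (M : Matrix (Fin m) (Fin m) ℝ)
    (hM : M = H + c⁻¹ • Matrix.vecMulVec v v) (hMu : IsUnit M)
    (G : Matrix (Fin m) (Fin m) ℝ)
    (hG : G = M⁻¹ - c⁻¹ • Matrix.vecMulVec v v) :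
    0 < c ∧
    H * G * H = H ∧
    G * H * G = G ∧
    ((H * G)ᵀ = H * G ∧ H * G = 1 - c⁻¹ • Matrix.vecMulVec v v) ∧
    ((G * H)ᵀ = G * H ∧ G * H = 1 - c⁻¹ • Matrix.vecMulVec v v) ∧
    Gᵀ = G ∧ G.mulVec v = 0 := by
  -- positivity of c
  have hcpos : 0 < c := by
    obtain ⟨i, hi⟩ := Function.ne_iff.mp hv
    rw [hc]
    apply Finset.sum_pos' (fun j _ => sq_nonneg _)
    refine ⟨i, Finset.mem_univ i, ?_⟩
    have hi' : v i ≠ 0 := hi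
    positivity
  have hc0 : c ≠ 0 := ne_of_gt hcpos
  set W : Matrix (Fin m) (Fin m) ℝ := Matrix.vecMulVec v v with hW
  set P : Matrix (Fin m) (Fin m) ℝ := c⁻¹ • W with hP
  -- basic facts about W
  have hvH : Matrix.vecMul v H = 0 := by
    rw [← hsym, Matrix.vecMul_transpose, hHv]
  have hHW : H * W = 0 := by
    ext i j
    have : (H * W) i j = (H.mulVec v i) * v j := by
      simp [hW, Matrix.mul_apply, Matrix.vecMulVec_apply, Matrix.mulVec, dotProduct,
        Finset.sum_mul, mul_assoc]
    rw [this, hHv]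
    simp
  have hWH : W * H = 0 := by
    ext i j
    have : (W * H) i j = v i * (Matrix.vecMul v H j) := by
      simp [hW, Matrix.mul_apply, Matrix.vecMulVec_apply, Matrix.vecMul, dotProduct,
        Finset.mul_sum, mul_assoc]
    rw [this, hvH]
    simp
  have hWW : W * W = c • W := by
    ext i j
    simp only [hW, Matrix.mul_apply, Matrix.vecMulVec_apply, Matrix.smul_apply, smul_eq_mul]
    rw [hc, Finset.sum_mul]
    exact Finset.sum_congr rfl fun k _ => by ring
  have hWv : W.mulVec v = c • v := by
    ext i
    simp only [hW, Matrix.mulVec, dotProduct, Matrix.vecMulVec_apply, Pi.smul_apply,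
      smul_eq_mul]
    rw [hc, Finset.sum_mul]
    exact Finset.sum_congr rfl fun k _ => by ring
  have hWt : Wᵀ = W := by
    ext i j
    simp [hW, Matrix.vecMulVec_apply, mul_comm]
  -- facts about P
  have hHP : H * P = 0 := by
    rw [hP, Matrix.mul_smul, hHW, smul_zero]
  have hPH : P * H = 0 := by
    rw [hP, Matrix.smul_mul, hWH, smul_zero]
  have hPP : P * P = P := by
    rw [hP, Matrix.smul_mul, Matrix.mul_smul, hWW, smul_smul, smul_smul,
      inv_mul_cancel_right₀ hc0]
  have hPv : P.mulVec v = v := by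
    rw [hP, Matrix.smul_mulVec, hWv, smul_smul, inv_mul_cancel₀ hc0, one_smul]
  have hPt : Pᵀ = P := by
    rw [hP, Matrix.transpose_smul, hWt]
  -- facts about M
  have hdet : IsUnit M.det := (Matrix.isUnit_iff_isUnit_det M).mp hMu
  have hMinv : M⁻¹ * M = 1 := Matrix.nonsing_inv_mul M hdet
  have hinvM : M * M⁻¹ = 1 := Matrix.mul_nonsing_inv M hdet
  have hMP : M * P = P := by
    rw [hM, add_mul, hHP, hPP, zero_add]
  have hPM : P * M = P := by
    rw [hM, mul_add, hPH, hPP, zero_add]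
  have hMiP : M⁻¹ * P = P := by
    calc M⁻¹ * P = M⁻¹ * (M * P) := by rw [hMP]
    _ = (M⁻¹ * M) * P := by rw [mul_assoc]
    _ = P := by rw [hMinv, one_mul]
  have hPMi : P * M⁻¹ = P := by
    calc P * M⁻¹ = (P * M) * M⁻¹ := by rw [hPM]
    _ = P * (M * M⁻¹) := by rw [mul_assoc]
    _ = P := by rw [hinvM, mul_one]
  have hMt : Mᵀ = M := by
    rw [hM, Matrix.transpose_add, hsym, Matrix.transpose_smul, hWt]
  have hMit : (M⁻¹)ᵀ = M⁻¹ := by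
    rw [Matrix.transpose_nonsing_inv, hMt]
  -- H = M - P
  have hHM : H = M - P := by rw [hM, add_sub_cancel_right]
  -- G * H and H * G
  have hGH : G * H = 1 - P := by
    rw [hG, sub_mul, hPH, hHM, mul_sub, hMinv, hMiP, sub_zero]
  have hHG : H * G = 1 - P := by
    rw [hG, mul_sub, hHP, hHM, sub_mul, hinvM, hPMi, sub_zero]
  -- G P = 0
  have hGP : G * P = 0 := by
    rw [hG, sub_mul, hMiP, hPP, sub_self]
  refine ⟨hcpos, ?_, ?_, ⟨?_, hHG⟩, ⟨?_, hGH⟩, ?_, ?_⟩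
  · rw [hHG, sub_mul, one_mul, hPH, sub_zero]
  · rw [mul_assoc, hHG, mul_sub, mul_one, hGP, sub_zero]
  · rw [hHG, Matrix.transpose_sub, Matrix.transpose_one, hPt]
  · rw [hGH, Matrix.transpose_sub, Matrix.transpose_one, hPt]
  · rw [hG, Matrix.transpose_sub, hMit, hPt]
  · rw [hG, Matrix.sub_mulVec, hPv]
    have : M⁻¹.mulVec v = v := by
      have hMv : M.mulVec v = v := by
        rw [hM, Matrix.add_mulVec, hHv, Matrix.smul_mulVec, hWv, smul_smul,
          inv_mul_cancel₀ hc0, one_smul, zero_add]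
      calc M⁻¹.mulVec v = M⁻¹.mulVec (M.mulVec v) := by rw [hMv]
      _ = (M⁻¹ * M).mulVec v := by rw [Matrix.mulVec_mulVec]
      _ = v := by rw [hMinv, Matrix.one_mulVec]
    rw [this, sub_self]
end
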